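/- In a δ-hyperbolic Cayley graph, suppose geodesic words a, b, u, v satisfy vb =_G au, and u factors as u = u'u''u''' with |u'| ≥ |a| + 2δ, |u''| ≥ 4δ, and |u'''| ≥ |b| + 2δ. Then there is a factorization v = v'v''v''' and geodesic words c, d with |c|, |d| ≤ 2δ such that v'c =_G au', v''d =_G cu'', and v'''b =_G du'''. -/

import Mathlib

/-- The element of the group `G` represented by the word `w` over the
generating set, where `σ` maps generators to group elements. -/
def evalW {α : Type*} {G : Type*} [Group G] (σ : α → G) (w : List α) : G :=
  (w.map σ).prod

/-- The word length of a group element: the smallest length of a word over the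
generators representing it. -/
noncomputable def wlen {α : Type*} {G : Type*} [Group G] (σ : α → G) (g : G) : ℕ :=
  sInf {n | ∃ w : List α, evalW σ w = g ∧ w.length = n}

/-- The word metric on the Cayley graph of `G` with respect to `σ`. -/
noncomputable def gdist {α : Type*} {G : Type*} [Group G] (σ : α → G) (g h : G) : ℕ :=
  wlen σ (g⁻¹ * h)

/-- `σ` lists a generating set of `G`: every element is represented by a word. -/
def Generates {α : Type*} {G : Type*} [Group G] (σ : α → G) : Prop :=
  ∀ g : G, ∃ w : List α, evalW σ w = g

/-- The generating set is symmetric: it is closed under inversion. -/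
def SymmetricGens {α : Type*} {G : Type*} [Group G] (σ : α → G) : Prop :=
  ∀ a : α, ∃ b : α, σ b = (σ a)⁻¹

/-- A word is geodesic if it labels a geodesic path in the Cayley graph,
i.e. its length equals the word length of the element it represents. -/
def IsGeodesicWord {α : Type*} {G : Type*} [Group G] (σ : α → G) (w : List α) : Prop :=
  wlen σ (evalW σ w) = w.length

/-- The Cayley graph of `G` (w.r.t. `σ`) is `δ`-hyperbolic: every geodesic
triangle is `δ`-slim.  A triangle is encoded by geodesic words `x, y, z` with
`eval x · eval y · eval z = 1`; the side labelled `x` starts at `1`, the side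
labelled `y` starts at `eval x`, the side labelled `z` starts at `eval x · eval y`.
Slimness: every point on the first side is within distance `δ` of the union of
the other two sides (by symmetry of the quantification this applies to each side). -/
def DeltaHyperbolic {α : Type*} {G : Type*} [Group G] (σ : α → G) (δ : ℕ) : Prop :=
  ∀ x y z : List α, IsGeodesicWord σ x → IsGeodesicWord σ y → IsGeodesicWord σ z →
    evalW σ x * evalW σ y * evalW σ z = 1 →
    ∀ i ≤ x.length, ∃ j : ℕ,
      (j ≤ y.length ∧
        gdist σ (evalW σ (x.take i)) (evalW σ x * evalW σ (y.take j)) ≤ δ) ∨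
      (j ≤ z.length ∧
        gdist σ (evalW σ (x.take i)) (evalW σ x * evalW σ y * evalW σ (z.take j)) ≤ δ)

/-!
Cut the quadrilateral twice. With the diagonal from the end of `a` to the start of `b`, the point
of `u` at the end of `u'` is `δ`-close to the diagonal (the side `b` is too short to reach it) and
that point of the diagonal is `δ`-close to `v` (the side `a` is too short), giving `c` with
`|c| ≤ 2δ`. The remaining quadrilateral `c, u''u''', b, v''v'''` satisfies the same hypotheses
because `|u''| ≥ 4δ ≥ |c| + 2δ`, and cutting it at the end of `u''` gives `d`.
-/

section WordMetric

variable {α G : Type*} [Group G] {σ : α → G}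

@[simp]
lemma evalW_nil : evalW σ [] = 1 := rfl

lemma evalW_append (w₁ w₂ : List α) : evalW σ (w₁ ++ w₂) = evalW σ w₁ * evalW σ w₂ := by
  simp [evalW]

lemma evalW_take_mul_evalW_drop (w : List α) (n : ℕ) :
    evalW σ (w.take n) * evalW σ (w.drop n) = evalW σ w := by
  rw [← evalW_append, List.take_append_drop]

lemma wlen_evalW_le (σ : α → G) (w : List α) : wlen σ (evalW σ w) ≤ w.length :=
  Nat.sInf_le ⟨w, rfl, rfl⟩

lemma exists_isGeodesicWord_evalW_eq (hgen : Generates σ) (g : G) :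
    ∃ w, IsGeodesicWord σ w ∧ evalW σ w = g := by
  obtain ⟨w, hw, hlen⟩ := Nat.sInf_mem (s := {n | ∃ w : List α, evalW σ w = g ∧ w.length = n})
    (let ⟨w, hw⟩ := hgen g; ⟨w.length, w, hw, rfl⟩)
  exact ⟨w, by rw [IsGeodesicWord, hw]; exact hlen.symm, hw⟩

lemma wlen_mul_le (hgen : Generates σ) (g h : G) : wlen σ (g * h) ≤ wlen σ g + wlen σ h := by
  obtain ⟨w₁, hw₁, rfl⟩ := exists_isGeodesicWord_evalW_eq hgen g
  obtain ⟨w₂, hw₂, rfl⟩ := exists_isGeodesicWord_evalW_eq hgen h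
  calc wlen σ (evalW σ w₁ * evalW σ w₂) ≤ (w₁ ++ w₂).length := by
        rw [← evalW_append]; exact wlen_evalW_le σ _
    _ = _ := by rw [List.length_append, hw₁, hw₂]

lemma IsGeodesicWord.of_append (hgen : Generates σ) {w₁ w₂ : List α}
    (hw : IsGeodesicWord σ (w₁ ++ w₂)) : IsGeodesicWord σ w₁ ∧ IsGeodesicWord σ w₂ := by
  have h₁ := wlen_evalW_le σ w₁
  have h₂ := wlen_evalW_le σ w₂
  have h := wlen_mul_le hgen (evalW σ w₁) (evalW σ w₂)
  rw [← evalW_append, hw, List.length_append] at h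
  exact ⟨by unfold IsGeodesicWord; omega, by unfold IsGeodesicWord; omega⟩

lemma IsGeodesicWord.take (hgen : Generates σ) {w : List α} (hw : IsGeodesicWord σ w) (n : ℕ) :
    IsGeodesicWord σ (w.take n) :=
  (IsGeodesicWord.of_append hgen ((List.take_append_drop n w).symm ▸ hw)).1

lemma IsGeodesicWord.drop (hgen : Generates σ) {w : List α} (hw : IsGeodesicWord σ w) (n : ℕ) :
    IsGeodesicWord σ (w.drop n) :=
  (IsGeodesicWord.of_append hgen ((List.take_append_drop n w).symm ▸ hw)).2

def invWord (ι : α → α) (w : List α) : List α := (w.map ι).reverse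

variable {ι : α → α}

@[simp]
lemma length_invWord (w : List α) : (invWord ι w).length = w.length := by
  simp [invWord]

lemma evalW_invWord (hι : ∀ x, σ (ι x) = (σ x)⁻¹) (w : List α) :
    evalW σ (invWord ι w) = (evalW σ w)⁻¹ := by
  simp [evalW, invWord, List.prod_inv_reverse, Function.comp_def, hι]

lemma evalW_mul_evalW_take_invWord (hι : ∀ x, σ (ι x) = (σ x)⁻¹) (w : List α) (j : ℕ) :
    evalW σ w * evalW σ ((invWord ι w).take j) = evalW σ (w.take (w.length - j)) := by
  rw [invWord, List.take_reverse, List.length_map, ← List.map_drop, ← invWord,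
    evalW_invWord hι, ← evalW_take_mul_evalW_drop w (w.length - j)]
  group

lemma wlen_inv (hι : ∀ x, σ (ι x) = (σ x)⁻¹) (hgen : Generates σ) (g : G) :
    wlen σ g⁻¹ = wlen σ g := by
  have hle : ∀ g : G, wlen σ g⁻¹ ≤ wlen σ g := fun g ↦ by
    obtain ⟨w, hw, rfl⟩ := exists_isGeodesicWord_evalW_eq hgen g
    calc wlen σ (evalW σ w)⁻¹ = wlen σ (evalW σ (invWord ι w)) := by rw [evalW_invWord hι]
      _ ≤ (invWord ι w).length := wlen_evalW_le σ _
      _ = wlen σ (evalW σ w) := by rw [length_invWord, hw]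
  exact le_antisymm (hle g) (by simpa using hle g⁻¹)

lemma IsGeodesicWord.invWord (hι : ∀ x, σ (ι x) = (σ x)⁻¹) (hgen : Generates σ) {w : List α}
    (hw : IsGeodesicWord σ w) : IsGeodesicWord σ (invWord ι w) := by
  rw [IsGeodesicWord, evalW_invWord hι, wlen_inv hι hgen, length_invWord, hw]

lemma gdist_comm (hι : ∀ x, σ (ι x) = (σ x)⁻¹) (hgen : Generates σ) (g h : G) :
    gdist σ g h = gdist σ h g := by
  rw [gdist, gdist, ← wlen_inv hι hgen, mul_inv_rev, inv_inv]

lemma gdist_triangle (hgen : Generates σ) (g h k : G) :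
    gdist σ g k ≤ gdist σ g h + gdist σ h k := by
  simpa [gdist, mul_assoc] using wlen_mul_le hgen (g⁻¹ * h) (h⁻¹ * k)

@[simp]
lemma gdist_mul_left (g h k : G) : gdist σ (g * h) (g * k) = gdist σ h k := by
  simp [gdist, mul_assoc]

lemma IsGeodesicWord.gdist_mul_evalW_take (hgen : Generates σ) {w : List α}
    (hw : IsGeodesicWord σ w) (p : G) {i : ℕ} (hi : i ≤ w.length) :
    gdist σ p (p * evalW σ (w.take i)) = i := by
  have h := hw.take hgen i
  rw [IsGeodesicWord, List.length_take, min_eq_left hi] at h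
  simpa [gdist] using h

lemma IsGeodesicWord.gdist_mul_evalW_take_mul_evalW (hgen : Generates σ) {w : List α}
    (hw : IsGeodesicWord σ w) (p : G) (i : ℕ) :
    gdist σ (p * evalW σ (w.take i)) (p * evalW σ w) = w.length - i := by
  rw [gdist_mul_left, gdist, ← evalW_take_mul_evalW_drop w i, inv_mul_cancel_left,
    hw.drop hgen i, List.length_drop]

end WordMetric

section SlimTriangles

variable {α G : Type*} [Group G] {σ : α → G} {δ : ℕ} {ι : α → α}
  {x y z : List α} {p q r : G} {i : ℕ}

lemma DeltaHyperbolic.slim_triangle (hhyp : DeltaHyperbolic σ δ) (hx : IsGeodesicWord σ x)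
    (hy : IsGeodesicWord σ y) (hz : IsGeodesicWord σ z) (hpq : p * evalW σ x = q)
    (hqr : q * evalW σ y = r) (hrp : r * evalW σ z = p) (hi : i ≤ x.length) :
    ∃ j, (j ≤ y.length ∧ gdist σ (p * evalW σ (x.take i)) (q * evalW σ (y.take j)) ≤ δ) ∨
      (j ≤ z.length ∧ gdist σ (p * evalW σ (x.take i)) (r * evalW σ (z.take j)) ≤ δ) := by
  subst hpq hqr
  have hxyz : evalW σ x * evalW σ y * evalW σ z = 1 := by simpa [mul_assoc] using hrp
  obtain ⟨j, h⟩ := hhyp x y z hx hy hz hxyz i hi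
  exact ⟨j, by simpa only [mul_assoc, gdist_mul_left] using h⟩

lemma DeltaHyperbolic.exists_near_third_side (hhyp : DeltaHyperbolic σ δ) (hgen : Generates σ)
    (hι : ∀ x, σ (ι x) = (σ x)⁻¹) (hx : IsGeodesicWord σ x) (hy : IsGeodesicWord σ y)
    (hz : IsGeodesicWord σ z) (hpq : p * evalW σ x = q) (hqr : q * evalW σ y = r)
    (hrp : r * evalW σ z = p) (hfar : i + y.length + δ ≤ x.length) :
    ∃ j ≤ z.length, gdist σ (p * evalW σ (x.take i)) (r * evalW σ (z.take j)) ≤ δ := by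
  obtain ⟨j, ⟨hj, hd⟩ | hnear⟩ := hhyp.slim_triangle hx hy hz hpq hqr hrp (i := i) (by omega)
  · have hxq : gdist σ (p * evalW σ (x.take i)) q = x.length - i := by
      rw [← hpq]; exact hx.gdist_mul_evalW_take_mul_evalW hgen p i
    have hyq : gdist σ (q * evalW σ (y.take j)) q = j := by
      rw [gdist_comm hι hgen]; exact hy.gdist_mul_evalW_take hgen q hj
    -- points of `y` lie within `|y|` of `q`, so only its endpoint `r` can be this close
    have hj : j = y.length := by
      have := gdist_triangle hgen (p * evalW σ (x.take i)) (q * evalW σ (y.take j)) q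
      omega
    subst hj
    exact ⟨0, Nat.zero_le _, by simpa [hqr] using hd⟩
  · exact ⟨j, hnear⟩

lemma DeltaHyperbolic.exists_near_second_side (hhyp : DeltaHyperbolic σ δ) (hgen : Generates σ)
    (hι : ∀ x, σ (ι x) = (σ x)⁻¹) (hx : IsGeodesicWord σ x) (hy : IsGeodesicWord σ y)
    (hz : IsGeodesicWord σ z) (hpq : p * evalW σ x = q) (hqr : q * evalW σ y = r)
    (hrp : r * evalW σ z = p) (hfar : z.length + δ ≤ i) (hi : i ≤ x.length) :
    ∃ j ≤ y.length, gdist σ (p * evalW σ (x.take i)) (q * evalW σ (y.take j)) ≤ δ := by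
  obtain ⟨j, hnear | ⟨hj, hd⟩⟩ := hhyp.slim_triangle hx hy hz hpq hqr hrp hi
  · exact ⟨j, hnear⟩
  · have hpx : gdist σ p (p * evalW σ (x.take i)) = i := hx.gdist_mul_evalW_take hgen p hi
    have hpz : gdist σ p (r * evalW σ (z.take j)) = z.length - j := by
      rw [gdist_comm hι hgen, ← hrp]; exact hz.gdist_mul_evalW_take_mul_evalW hgen r j
    -- points of `z` lie within `|z|` of `p`, so only its starting point `r` can be this close
    have hj : j = 0 := by
      have := gdist_triangle hgen p (r * evalW σ (z.take j)) (p * evalW σ (x.take i))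
      rw [gdist_comm hι hgen (r * _)] at this
      omega
    subst hj
    exact ⟨y.length, le_rfl, by simpa [hqr] using hd⟩

end SlimTriangles

section Quadrilaterals

variable {α G : Type*} [Group G] {σ : α → G} {δ : ℕ} {ι : α → α} {a b u₁ u₂ v : List α}

lemma DeltaHyperbolic.exists_gdist_evalW_take_le (hhyp : DeltaHyperbolic σ δ)
    (hgen : Generates σ) (hι : ∀ x, σ (ι x) = (σ x)⁻¹) (ha : IsGeodesicWord σ a)
    (hb : IsGeodesicWord σ b) (hu : IsGeodesicWord σ (u₁ ++ u₂)) (hv : IsGeodesicWord σ v)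
    (heq : evalW σ v * evalW σ b = evalW σ a * evalW σ (u₁ ++ u₂))
    (h₁ : a.length + 2 * δ ≤ u₁.length) (h₂ : b.length + 2 * δ ≤ u₂.length) :
    ∃ t, gdist σ (evalW σ (v.take t)) (evalW σ a * evalW σ u₁) ≤ 2 * δ := by
  obtain ⟨g, hg, hAg⟩ := exists_isGeodesicWord_evalW_eq hgen ((evalW σ a)⁻¹ * evalW σ v)
  replace hAg : evalW σ a * evalW σ g = evalW σ v := by rw [hAg, mul_inv_cancel_left]
  have hUb : evalW σ a * evalW σ (u₁ ++ u₂) * evalW σ (invWord ι b) = evalW σ v := by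
    rw [evalW_invWord hι, ← heq, mul_inv_cancel_right]
  have hgA : evalW σ v * evalW σ (invWord ι g) = evalW σ a := by
    rw [evalW_invWord hι, ← hAg, mul_inv_cancel_right]
  obtain ⟨j, hj, hd₁⟩ := hhyp.exists_near_third_side hgen hι hu (hb.invWord hι hgen)
    (hg.invWord hι hgen) rfl hUb hgA (i := u₁.length)
    (by simp only [length_invWord, List.length_append]; omega)
  rw [List.take_left, ← hAg, mul_assoc, evalW_mul_evalW_take_invWord hι] at hd₁
  have hfar : a.length + δ ≤ g.length - j := by
    have hu₁ : gdist σ (evalW σ a) (evalW σ a * evalW σ u₁) = u₁.length := by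
      rw [gdist, inv_mul_cancel_left]; exact (hu.of_append hgen).1
    have := gdist_triangle hgen (evalW σ a) (evalW σ a * evalW σ (g.take (g.length - j)))
      (evalW σ a * evalW σ u₁)
    rw [hu₁, hg.gdist_mul_evalW_take hgen _ (by omega), gdist_comm hι hgen] at this
    omega
  obtain ⟨t, -, hd₂⟩ := hhyp.exists_near_second_side hgen hι hg (hv.invWord hι hgen) ha hAg
    (by rw [evalW_invWord hι, mul_inv_cancel]) (one_mul _) hfar (by omega)
  rw [evalW_mul_evalW_take_invWord hι] at hd₂
  refine ⟨v.length - t, ?_⟩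
  calc _ ≤ _ := gdist_triangle hgen _ (evalW σ a * evalW σ (g.take (g.length - j))) _
    _ ≤ δ + δ := by
      rw [gdist_comm hι hgen, gdist_comm hι hgen _ (_ * evalW σ u₁)]
      exact add_le_add hd₂ hd₁
    _ = 2 * δ := by ring

lemma DeltaHyperbolic.exists_split_two (hhyp : DeltaHyperbolic σ δ) (hgen : Generates σ)
    (hι : ∀ x, σ (ι x) = (σ x)⁻¹) (ha : IsGeodesicWord σ a) (hb : IsGeodesicWord σ b)
    (hu : IsGeodesicWord σ (u₁ ++ u₂)) (hv : IsGeodesicWord σ v)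
    (heq : evalW σ v * evalW σ b = evalW σ a * evalW σ (u₁ ++ u₂))
    (h₁ : a.length + 2 * δ ≤ u₁.length) (h₂ : b.length + 2 * δ ≤ u₂.length) :
    ∃ v₁ v₂ c : List α, v = v₁ ++ v₂ ∧ IsGeodesicWord σ c ∧ c.length ≤ 2 * δ ∧
      evalW σ v₁ * evalW σ c = evalW σ a * evalW σ u₁ ∧
      evalW σ v₂ * evalW σ b = evalW σ c * evalW σ u₂ := by
  obtain ⟨t, ht⟩ := hhyp.exists_gdist_evalW_take_le hgen hι ha hb hu hv heq h₁ h₂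
  obtain ⟨c, hc, hcv⟩ := exists_isGeodesicWord_evalW_eq hgen
    ((evalW σ (v.take t))⁻¹ * (evalW σ a * evalW σ u₁))
  have hc₁ : evalW σ (v.take t) * evalW σ c = evalW σ a * evalW σ u₁ := by
    rw [hcv, mul_inv_cancel_left]
  refine ⟨v.take t, v.drop t, c, (List.take_append_drop t v).symm, hc, ?_, hc₁, ?_⟩
  · rw [← hc, hcv]; exact ht
  · apply mul_left_cancel (a := evalW σ (v.take t))
    rw [← mul_assoc, evalW_take_mul_evalW_drop, heq, ← mul_assoc, hc₁, evalW_append, mul_assoc]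

end Quadrilaterals

theorem quadrilateral_split_three_general {α : Type*} {G : Type*} [Group G]
    (σ : α → G) (δ : ℕ)
    (hgen : Generates σ) (hsym : SymmetricGens σ) (hhyp : DeltaHyperbolic σ δ)
    (a b u v : List α)
    (ha : IsGeodesicWord σ a) (hb : IsGeodesicWord σ b)
    (hu : IsGeodesicWord σ u) (hv : IsGeodesicWord σ v)
    (heq : evalW σ v * evalW σ b = evalW σ a * evalW σ u)
    (u' u'' u''' : List α) (hsplit : u = u' ++ u'' ++ u''')
    (h1 : a.length + 2 * δ ≤ u'.length) (h2 : 4 * δ ≤ u''.length)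
    (h3 : b.length + 2 * δ ≤ u'''.length) :
    ∃ v' v'' v''' c d : List α, v = v' ++ v'' ++ v''' ∧
      IsGeodesicWord σ c ∧ IsGeodesicWord σ d ∧
      c.length ≤ 2 * δ ∧ d.length ≤ 2 * δ ∧
      evalW σ v' * evalW σ c = evalW σ a * evalW σ u' ∧
      evalW σ v'' * evalW σ d = evalW σ c * evalW σ u'' ∧
      evalW σ v''' * evalW σ b = evalW σ d * evalW σ u''' := by
  choose ι hι using hsym
  rw [hsplit, List.append_assoc] at hu heq
  obtain ⟨v', w, c, rfl, hc, hcδ, hc₁, hc₂⟩ := hhyp.exists_split_two hgen hι ha hb hu hv heq h1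
    (by simp only [List.length_append]; omega)
  obtain ⟨v'', v''', d, rfl, hd, hdδ, hd₁, hd₂⟩ := hhyp.exists_split_two hgen hι hc hb
    (hu.of_append hgen).2 (hv.of_append hgen).2 hc₂ (by omega) h3
  exact ⟨v', v'', v''', c, d, (List.append_assoc _ _ _).symm, hc, hd, hcδ, hdδ, hc₁, hd₁, hd₂⟩

/-- Lemma on geodesic quadrilaterals, three-piece version: if `vb =_G au` with
`a, b, u, v` geodesic and `u = u'u''u'''` with `|u'| ≥ |a| + 2δ`, `|u''| ≥ 4δ`,
`|u'''| ≥ |b| + 2δ`, then there is a factorization `v = v'v''v'''` and geodesic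
words `c, d` with `|c|, |d| ≤ 2δ` such that `v'c =_G au'`, `v''d =_G cu''`, and
`v'''b =_G du'''`. -/
theorem quadrilateral_split_three {α : Type*} {G : Type*} [Group G] [Fintype α]
    (σ : α → G) (δ : ℕ)
    (hgen : Generates σ) (hsym : SymmetricGens σ) (hhyp : DeltaHyperbolic σ δ)
    (a b u v : List α)
    (ha : IsGeodesicWord σ a) (hb : IsGeodesicWord σ b)
    (hu : IsGeodesicWord σ u) (hv : IsGeodesicWord σ v)
    (heq : evalW σ v * evalW σ b = evalW σ a * evalW σ u)
    (u' u'' u''' : List α) (hsplit : u = u' ++ u'' ++ u''')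
    (h1 : a.length + 2 * δ ≤ u'.length) (h2 : 4 * δ ≤ u''.length)
    (h3 : b.length + 2 * δ ≤ u'''.length) :
    ∃ v' v'' v''' c d : List α, v = v' ++ v'' ++ v''' ∧
      IsGeodesicWord σ c ∧ IsGeodesicWord σ d ∧
      c.length ≤ 2 * δ ∧ d.length ≤ 2 * δ ∧
      evalW σ v' * evalW σ c = evalW σ a * evalW σ u' ∧
      evalW σ v'' * evalW σ d = evalW σ c * evalW σ u'' ∧
      evalW σ v''' * evalW σ b = evalW σ d * evalW σ u''' :=
  quadrilateral_split_three_general σ δ hgen hsym hhyp a b u v ha hb hu hv heq u' u'' u''' hsplit h1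
    h2 h3
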